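/- (Asai's product formula) Let N ≥ 1 and z ∈ ℍ, and set q = e^{2πiz}. Then ∏_{d | N} Δ(Nz/d)^{μ(d)} = q^{φ(N)} · ∏_{n=1}^{∞} Φ_N(qⁿ)^{24}, where the infinite product converges absolutely, μ is the Möbius function (exponent −1 meaning the reciprocal, which exists since Δ is nowhere zero on ℍ), φ is Euler's totient function, and Φ_N is the N-th cyclotomic polynomial. -/

import Mathlib

/-!
With `q = e^{2πiz}` one has `Δ(mz) = q^m ∏ₙ (1 - (q^m)^n)^{24}`. Möbius inversion of
`x^N - 1 = ∏_{d ∣ N} Φ_d(x)` at a point `x` that is not a root of unity gives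
`Φ_N(x) = ∏_{d ∣ N} (x^{N/d} - 1)^{μ(d)}`, and the 24th power makes the signs of the factors
irrelevant. Applying this at `x = qⁿ` and multiplying the infinite products, which have nonzero
limits, turns `∏_{d ∣ N} Δ(Nz/d)^{μ(d)}` into `q^{Σ μ(d) N/d} ∏ₙ Φ_N(qⁿ)^{24}`, and
`Σ_{d ∣ N} μ(d) N/d = φ(N)` is Möbius inversion of `Σ_{d ∣ N} φ(d) = N`.
-/

noncomputable section
open Complex Real MeasureTheory UpperHalfPlane Filter Topology
open scoped UpperHalfPlane

/-- The discriminant modular form `Δ(z) = e^{2πiz} ∏_{n ≥ 1} (1 - e^{2πinz})^{24}`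
(defined for any `z : ℂ`, intended for `Im z > 0`). -/
def Delta (z : ℂ) : ℂ :=
  Complex.exp (2 * (π : ℂ) * Complex.I * z) *
    ∏' n : ℕ, (1 - Complex.exp (2 * (π : ℂ) * Complex.I * ((n : ℂ) + 1) * z)) ^ 24

open Polynomial ArithmeticFunction
open scoped ArithmeticFunction.Moebius

lemma pow_ne_one_of_norm_lt_one {R : Type*} [NormedRing R] [NormOneClass R] {x : R}
    (hx : ‖x‖ < 1) {n : ℕ} (hn : 0 < n) : x ^ n ≠ 1 := by
  intro h
  have : ‖x ^ n‖ < 1 := (norm_pow_le' x hn).trans_lt (pow_lt_one₀ (norm_nonneg x) hx hn.ne')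
  simp [h] at this

lemma HasProd.zpow₀ {ι K : Type*} [CommGroupWithZero K] [TopologicalSpace K] [ContinuousMul K]
    [ContinuousInv₀ K] {f : ι → K} {a : K} (h : HasProd f a) (ha : a ≠ 0) (m : ℤ) :
    HasProd (fun i ↦ f i ^ m) (a ^ m) := by
  cases m with
  | ofNat k => simpa using h.pow k
  | negSucc k => simpa using (h.pow (k + 1)).inv₀ (pow_ne_zero _ ha)

lemma eval_cyclotomic_eq_prod_divisors_zpow_moebius {K : Type*} [Field K] {x : K}
    (hx : ∀ n, 0 < n → x ^ n ≠ 1) {N : ℕ} (hN : 0 < N) :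
    eval x (cyclotomic N K) = ∏ d ∈ N.divisors, (x ^ (N / d) - 1) ^ μ d := by
  have hprod (n : ℕ) (hn : 0 < n) :
      ∏ i ∈ n.divisors, eval x (cyclotomic i K) = x ^ n - 1 := by
    simpa [eval_prod] using congrArg (eval x) (prod_cyclotomic_eq_X_pow_sub_one hn K)
  have hsub (n : ℕ) (hn : 0 < n) : x ^ n - 1 ≠ 0 := sub_ne_zero.mpr (hx n hn)
  have hcyc (n : ℕ) (hn : 0 < n) : eval x (cyclotomic n K) ≠ 0 :=
    Finset.prod_ne_zero_iff.mp (hprod n hn ▸ hsub n hn) n (Nat.mem_divisors_self n hn.ne')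
  rw [← (prod_eq_iff_prod_pow_moebius_eq_of_nonzero hcyc hsub).mp hprod N hN,
    Nat.prod_divisorsAntidiagonal (fun i j ↦ (x ^ j - 1) ^ μ i)]

lemma eval_cyclotomic_pow_eq_prod_divisors_zpow_moebius {K : Type*} [Field K] {x : K}
    (hx : ∀ n, 0 < n → x ^ n ≠ 1) {N : ℕ} (hN : 0 < N) {k : ℕ} (hk : Even k) :
    eval x (cyclotomic N K) ^ k = ∏ d ∈ N.divisors, ((1 - x ^ (N / d)) ^ k) ^ μ d := by
  rw [eval_cyclotomic_eq_prod_divisors_zpow_moebius hx hN, ← Finset.prod_pow]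
  refine Finset.prod_congr rfl fun d _ ↦ ?_
  rw [← zpow_natCast, ← zpow_mul, mul_comm, zpow_mul, zpow_natCast, ← hk.neg_pow, neg_sub]

lemma prod_divisors_pow_div_zpow_moebius {G : Type*} [CommGroupWithZero G] {q : G} (hq : q ≠ 0)
    {N : ℕ} (hN : 0 < N) : ∏ d ∈ N.divisors, (q ^ (N / d)) ^ μ d = q ^ N.totient := by
  have hprod (n : ℕ) (_ : 0 < n) : ∏ i ∈ n.divisors, q ^ i.totient = q ^ n := by
    rw [Finset.prod_pow_eq_pow_sum, Nat.sum_totient]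
  rw [← (prod_eq_iff_prod_pow_moebius_eq_of_nonzero (fun n _ ↦ pow_ne_zero _ hq)
    (fun n _ ↦ pow_ne_zero _ hq)).mp hprod N hN,
    Nat.prod_divisorsAntidiagonal (fun i j ↦ (q ^ j) ^ μ i)]

lemma tprod_one_sub_pow_pow_ne_zero {y : ℂ} (hy : ‖y‖ < 1) (k : ℕ) :
    ∏' n : ℕ, (1 - y ^ (n + 1)) ^ k ≠ 0 := by
  rw [(ModularForm.multipliable_one_sub_pow hy).tprod_pow]
  refine pow_ne_zero _ (tprod_one_add_ne_zero_of_summable (f := fun n ↦ -y ^ (n + 1)) ?_ ?_)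
  · exact fun n ↦ sub_ne_zero.mpr (pow_ne_one_of_norm_lt_one hy n.succ_pos).symm
  · simpa using (summable_nat_add_iff 1).mpr (summable_geometric_of_lt_one (norm_nonneg _) hy)

theorem hasProd_eval_cyclotomic_pow {q : ℂ} (hq : ‖q‖ < 1) {N : ℕ} (hN : 0 < N) {k : ℕ}
    (hk : Even k) :
    HasProd (fun n : ℕ ↦ eval (q ^ (n + 1)) (cyclotomic N ℂ) ^ k)
      (∏ d ∈ N.divisors, (∏' n : ℕ, (1 - (q ^ (N / d)) ^ (n + 1)) ^ k) ^ μ d) := by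
  have hfactor (d : ℕ) (hd : d ∈ N.divisors) :
      HasProd (fun n : ℕ ↦ ((1 - (q ^ (N / d)) ^ (n + 1)) ^ k) ^ μ d)
        ((∏' n : ℕ, (1 - (q ^ (N / d)) ^ (n + 1)) ^ k) ^ μ d) := by
    have hy : ‖q ^ (N / d)‖ < 1 := by
      have hNd : N / d ≠ 0 := (Nat.div_pos (Nat.divisor_le hd) (Nat.pos_of_mem_divisors hd)).ne'
      simpa using pow_lt_one₀ (norm_nonneg q) hq hNd
    exact (((ModularForm.multipliable_one_sub_pow hy).pow k).hasProd).zpow₀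
      (tprod_one_sub_pow_pow_ne_zero hy k) _
  convert hasProd_prod hfactor using 2 with n
  have hx : ‖q ^ (n + 1)‖ < 1 := by simpa using pow_lt_one₀ (norm_nonneg q) hq n.succ_ne_zero
  simp only [eval_cyclotomic_pow_eq_prod_divisors_zpow_moebius
    (fun m hm ↦ pow_ne_one_of_norm_lt_one hx hm) hN hk, pow_right_comm q (n + 1)]

lemma Delta_natCast_mul (m : ℕ) (z : ℂ) :
    Delta (m * z) = cexp (2 * π * Complex.I * z) ^ m *
      ∏' n : ℕ, (1 - (cexp (2 * π * Complex.I * z) ^ m) ^ (n + 1)) ^ 24 := by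
  have hexp (a : ℕ) (w : ℂ) :
      cexp (2 * π * Complex.I * w) ^ a = cexp (2 * π * Complex.I * (a * w)) := by
    rw [← Complex.exp_nat_mul]
    ring_nf
  rw [Delta, hexp]
  refine congrArg _ (tprod_congr fun n ↦ ?_)
  rw [hexp]
  push_cast
  ring_nf

/-- Asai's product formula: for `N ≥ 1`, `z ∈ ℍ` and `q = e^{2πiz}`,
`∏_{d ∣ N} Δ(Nz/d)^{μ(d)} = q^{φ(N)} ∏_{n ≥ 1} Φ_N(qⁿ)^{24}`,
the infinite product converging. -/
theorem stmt8 (N : ℕ) (hN : 1 ≤ N) (z : ℍ) :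
    Multipliable (fun n : ℕ =>
      (Polynomial.eval ((Complex.exp (2 * (π : ℂ) * Complex.I * (z : ℂ))) ^ (n + 1))
        (Polynomial.cyclotomic N ℂ)) ^ 24) ∧
    (∏ d ∈ N.divisors, Delta ((N : ℂ) * (z : ℂ) / (d : ℂ)) ^ ((ArithmeticFunction.moebius d : ℤ)))
      = (Complex.exp (2 * (π : ℂ) * Complex.I * (z : ℂ))) ^ (Nat.totient N) *
          ∏' n : ℕ,
            (Polynomial.eval ((Complex.exp (2 * (π : ℂ) * Complex.I * (z : ℂ))) ^ (n + 1))
              (Polynomial.cyclotomic N ℂ)) ^ 24 := by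
  set q := cexp (2 * π * Complex.I * z)
  have hprod := hasProd_eval_cyclotomic_pow (norm_exp_two_pi_I_lt_one z) hN (by decide : Even 24)
  refine ⟨hprod.multipliable, ?_⟩
  have hDelta (d : ℕ) (hd : d ∈ N.divisors) :
      Delta (N * z / d) = q ^ (N / d) * ∏' n : ℕ, (1 - (q ^ (N / d)) ^ (n + 1)) ^ 24 := by
    rw [← Delta_natCast_mul, Nat.cast_div (Nat.dvd_of_mem_divisors hd)
      (Nat.cast_ne_zero.mpr (Nat.pos_of_mem_divisors hd).ne'), mul_div_right_comm]
  rw [hprod.tprod_eq, Finset.prod_congr rfl fun d hd ↦ by rw [hDelta d hd, mul_zpow],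
    Finset.prod_mul_distrib, prod_divisors_pow_div_zpow_moebius (Complex.exp_ne_zero _) hN]
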